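/- (Totality and safety of gen_Δ on safe atoms.) For every division Δ and every atom A that is safe wrt Δ: gen_Δ(A) is defined; moreover gen_Δ(A) is again safe wrt Δ, and A is an instance of gen_Δ(A). -/

import Mathlib

/-- First-order terms over countably infinite sets of variables (ℕ)
and function symbols (ℕ). -/
inductive Term : Type where
  | var : ℕ → Term
  | app : ℕ → List Term → Term

namespace Term

/-- Applying a substitution (a mapping from variables to terms) homomorphically. -/
def subst (θ : ℕ → Term) : Term → Term
  | var v => θ v
  | app f ts => app f (ts.attach.map (fun x => x.1.subst θ))
decreasing_by
  have := List.sizeOf_lt_of_mem x.2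
  simp only [Term.app.sizeOf_spec]
  omega

/-- A term is ground if it contains no variables. -/
inductive Ground : Term → Prop where
  | app : ∀ f ts, (∀ t ∈ ts, Ground t) → Ground (app f ts)

/-- The variable `v` occurs in the term. -/
inductive Occurs (v : ℕ) : Term → Prop where
  | var : Occurs v (var v)
  | app : ∀ f ts t, t ∈ ts → Occurs v t → Occurs v (app f ts)

/-- `s` is an instance of `t` if `s = tθ` for some substitution `θ`. -/
def IsInstanceOf (s t : Term) : Prop := ∃ θ : ℕ → Term, t.subst θ = s

/-- Two terms are variants if each is an instance of the other. -/
def Variant (s t : Term) : Prop := s.IsInstanceOf t ∧ t.IsInstanceOf s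

end Term

/-- Types: type variables, the distinguished 0-ary constructors
`static`, `dynamic`, `nonvar`, and other constructors applied to types. -/
inductive Ty : Type where
  | var : ℕ → Ty
  | static : Ty
  | dynamic : Ty
  | nonvar : Ty
  | con : ℕ → List Ty → Ty

namespace Ty

/-- Applying a type substitution. -/
def subst (σ : ℕ → Ty) : Ty → Ty
  | var v => σ v
  | static => static
  | dynamic => dynamic
  | nonvar => nonvar
  | con c args => con c (args.attach.map (fun x => x.1.subst σ))
decreasing_by
  have := List.sizeOf_lt_of_mem x.2
  simp only [Ty.con.sizeOf_spec]
  omega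

/-- A type is ground if it contains no type variables. -/
inductive Ground : Ty → Prop where
  | static : Ground static
  | dynamic : Ground dynamic
  | nonvar : Ground nonvar
  | con : ∀ c args, (∀ τ ∈ args, Ground τ) → Ground (con c args)

/-- All type variables of the type are below `n`. -/
inductive VarsBelow (n : ℕ) : Ty → Prop where
  | var : ∀ v, v < n → VarsBelow n (var v)
  | static : VarsBelow n static
  | dynamic : VarsBelow n dynamic
  | nonvar : VarsBelow n nonvar
  | con : ∀ c args, (∀ τ ∈ args, VarsBelow n τ) → VarsBelow n (con c args)

end Ty

/-- A type definition `c(V₁,…,Vₙ) → f₁(T₁¹,…) ; … ; f_k(T_k¹,…)` for an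
`n`-ary type constructor: the variables are represented by `0,…,arity-1`,
the alternatives are pairs of a function symbol and the list of argument types;
the function symbols are distinct and the argument types only use
variables among `0,…,arity-1`. -/
structure TypeDef where
  arity : ℕ
  alts : List (ℕ × List Ty)
  alts_nonempty : alts ≠ []
  alts_nodup : (alts.map Prod.fst).Nodup
  vars_bound : ∀ p ∈ alts, ∀ τ ∈ p.2, Ty.VarsBelow arity τ

/-- A type system: exactly one type definition for every type constructor
other than `static`, `dynamic` and `nonvar`. -/
structure TypeSystem where
  defs : ℕ → TypeDef

mutual
/-- The type judgement `t : τ` relative to the type system `Γ`. -/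
inductive HasType (Γ : TypeSystem) : Term → Ty → Prop where
  | dyn (t : Term) : HasType Γ t .dynamic
  | stat (t : Term) : t.Ground → HasType Γ t .static
  | nv (f : ℕ) (ts : List Term) : HasType Γ (.app f ts) .nonvar
  | con (c : ℕ) (σ : ℕ → Ty) (f : ℕ) (Ts : List Ty) (ts : List Term)
      (hσ : ∀ v, (σ v).Ground)
      (hmem : (f, Ts) ∈ (Γ.defs c).alts)
      (hargs : HasTypeArgs Γ ts (Ts.map (Ty.subst σ))) :
      HasType Γ (.app f ts) (.con c ((List.range (Γ.defs c).arity).map σ))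

/-- `HasTypeArgs Γ ts τs` : the terms `ts` pointwise have the types `τs`. -/
inductive HasTypeArgs (Γ : TypeSystem) : List Term → List Ty → Prop where
  | nil : HasTypeArgs Γ [] []
  | cons {t τ ts τs} : HasType Γ t τ → HasTypeArgs Γ ts τs →
      HasTypeArgs Γ (t :: ts) (τ :: τs)
end

/-- Atoms `p(t₁,…,tₙ)` over a countably infinite set of predicate symbols (ℕ). -/
structure Atom where
  pred : ℕ
  args : List Term

namespace Atom

/-- Substitutions apply to atoms argumentwise. -/
def subst (θ : ℕ → Term) (A : Atom) : Atom := ⟨A.pred, A.args.map (Term.subst θ)⟩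

/-- `B` is an instance of `A`. -/
def IsInstanceOf (B A : Atom) : Prop := ∃ θ : ℕ → Term, A.subst θ = B

/-- Two atoms are variants if each is an instance of the other. -/
def Variant (A B : Atom) : Prop := A.IsInstanceOf B ∧ B.IsInstanceOf A

end Atom

/-- A division: a set of expressions `p(τ₁,…,τₙ)` (represented as pairs of a
predicate symbol and a list of types), with all types ground and at most one
division per predicate. -/
def IsDivision (Δ : Set (ℕ × List Ty)) : Prop :=
  (∀ d ∈ Δ, ∀ τ ∈ d.2, τ.Ground) ∧
  (∀ d ∈ Δ, ∀ d' ∈ Δ, d.1 = d'.1 → d = d')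

/-- An atom `p(t₁,…,tₙ)` is safe wrt `Δ` iff there is `p(τ₁,…,τₙ) ∈ Δ`
with `tᵢ : τᵢ` for all `i`. -/
def SafeAtom (Γ : TypeSystem) (Δ : Set (ℕ × List Ty)) (A : Atom) : Prop :=
  ∃ τs : List Ty, (A.pred, τs) ∈ Δ ∧ HasTypeArgs Γ A.args τs

mutual
/-- `Gen Γ τ t s L`: `s` is a result of the partial generalisation mapping
`gen_τ(t)`, where `L` records (in order) the fresh variables chosen. -/
inductive Gen (Γ : TypeSystem) : Ty → Term → Term → List ℕ → Prop where
  | static (t : Term) : Gen Γ .static t t []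
  | dynamic (t : Term) (v : ℕ) : Gen Γ .dynamic t (.var v) [v]
  | nonvar (f : ℕ) (ts : List Term) (vs : List ℕ) (h : vs.length = ts.length) :
      Gen Γ .nonvar (.app f ts) (.app f (vs.map Term.var)) vs
  | con (c : ℕ) (σ : ℕ → Ty) (f : ℕ) (Ts : List Ty) (ts ss : List Term) (L : List ℕ)
      (hσ : ∀ v, (σ v).Ground)
      (hmem : (f, Ts) ∈ (Γ.defs c).alts)
      (hargs : GenArgs Γ (Ts.map (Ty.subst σ)) ts ss L) :
      Gen Γ (.con c ((List.range (Γ.defs c).arity).map σ)) (.app f ts) (.app f ss) L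

/-- Pointwise generalisation of a list of terms, collecting the fresh variables. -/
inductive GenArgs (Γ : TypeSystem) : List Ty → List Term → List Term → List ℕ → Prop where
  | nil : GenArgs Γ [] [] [] []
  | cons {τ t s L τs ts ss Ls} : Gen Γ τ t s L → GenArgs Γ τs ts ss Ls →
      GenArgs Γ (τ :: τs) (t :: ts) (s :: ss) (L ++ Ls)
end

/-- `GenAtom Γ Δ A B L`: `B` is a result of `gen_Δ(A)` with fresh variables `L`. -/
def GenAtom (Γ : TypeSystem) (Δ : Set (ℕ × List Ty)) (A B : Atom) (L : List ℕ) : Prop :=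
  B.pred = A.pred ∧
  ∃ τs : List Ty, (A.pred, τs) ∈ Δ ∧ HasTypeArgs Γ A.args τs ∧
    GenArgs Γ τs A.args B.args L

/-!
`gen_τ(t)` is computed by recursion on the derivation of `t : τ`, drawing the fresh variables
consecutively from an interval `[n, n + k)` lying above every variable of `A`. Each clause of
`gen` mirrors a clause of the typing judgement, so the generalised atom is safe again (for
`static` the term is left unchanged and stays ground). `A` is recovered by the substitution
sending each fresh variable to the subterm it replaced: the substitutions obtained for the
arguments glue together because their fresh variables are pairwise distinct and occur nowhere
in `A`.
-/

theorem List.Nodup.exists_map_eq {α β : Type*} [DecidableEq α] {vs : List α} (hvs : vs.Nodup)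
    {ts : List β} (hlen : vs.length = ts.length) (g : α → β) :
    ∃ θ : α → β, vs.map θ = ts ∧ ∀ v ∉ vs, θ v = g v := by
  induction vs generalizing ts with
  | nil => exact ⟨g, (List.length_eq_zero_iff.mp hlen.symm).symm, fun _ _ => rfl⟩
  | cons w vs ih =>
    obtain ⟨t, ts, rfl⟩ := List.exists_cons_of_length_eq_add_one hlen.symm
    obtain ⟨hw, hvs⟩ := List.nodup_cons.mp hvs
    obtain ⟨θ, hθ, hθg⟩ := ih hvs (Nat.succ_injective hlen)
    refine ⟨Function.update θ w t, ?_, fun v hv => ?_⟩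
    · rw [List.map_cons, Function.update_self, List.map_congr_left fun v hv =>
        Function.update_of_ne (ne_of_mem_of_not_mem hv hw) t θ, hθ]
    · rw [Function.update_of_ne (List.ne_of_not_mem_cons hv),
        hθg v (List.not_mem_of_not_mem_cons hv)]

namespace Term

theorem subst_var (θ : ℕ → Term) (v : ℕ) : (var v).subst θ = θ v := by
  rw [subst]

theorem subst_app (θ : ℕ → Term) (f : ℕ) (ts : List Term) :
    (app f ts).subst θ = app f (ts.map (subst θ)) := by
  rw [subst, List.attach_map_val]

theorem subst_congr : ∀ {t : Term} {θ₁ θ₂ : ℕ → Term},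
    (∀ v, t.Occurs v → θ₁ v = θ₂ v) → t.subst θ₁ = t.subst θ₂
  | var v, _, _, h => by rw [subst_var, subst_var, h v .var]
  | app f ts, _, _, h => by
    rw [subst_app, subst_app]
    exact congrArg (app f) (List.map_congr_left fun t ht =>
      subst_congr fun v hv => h v (.app f ts t ht hv))

theorem subst_var_self : ∀ t : Term, t.subst var = t
  | var v => subst_var var v
  | app f ts => by
    rw [subst_app]
    exact congrArg (app f) ((List.map_congr_left fun t _ => subst_var_self t).trans ts.map_id)

theorem finite_setOf_occurs : ∀ t : Term, {v | t.Occurs v}.Finite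
  | var v => (Set.finite_singleton v).subset (by rintro _ ⟨⟩; rfl)
  | app f ts => (ts.finite_toSet.biUnion fun t (_ : t ∈ ts) => finite_setOf_occurs t).subset
      (by rintro v ⟨⟩; exact Set.mem_biUnion ‹_› ‹_›)

theorem exists_occurs_lt (ts : List Term) : ∃ n, ∀ t ∈ ts, ∀ v, t.Occurs v → v < n := by
  obtain ⟨m, hm⟩ := (ts.finite_toSet.biUnion fun t _ => finite_setOf_occurs t).bddAbove
  exact ⟨m + 1, fun t ht v hv => Nat.lt_succ_of_le (hm (Set.mem_biUnion ht hv))⟩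

end Term

section Gen

variable {Γ : TypeSystem}

mutual

theorem HasType.exists_gen {t : Term} {τ : Ty} (h : HasType Γ t τ) (n : ℕ) :
    ∃ s k, Gen Γ τ t s (List.range' n k) ∧ HasType Γ s τ :=
  match t, τ, h with
  | t, _, .dyn _ => ⟨.var n, 1, Gen.dynamic t n, .dyn _⟩
  | t, _, .stat _ hg => ⟨t, 0, Gen.static t, .stat t hg⟩
  | _, _, .nv f ts => ⟨.app f ((List.range' n ts.length).map .var), ts.length,
      Gen.nonvar f ts _ List.length_range', .nv _ _⟩
  | _, _, .con c σ f Ts ts hσ hmem hargs =>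
    have ⟨ss, k, hgen, hty⟩ := hargs.exists_genArgs n
    ⟨.app f ss, k, .con c σ f Ts ts ss _ hσ hmem hgen, .con c σ f Ts ss hσ hmem hty⟩

theorem HasTypeArgs.exists_genArgs {ts : List Term} {τs : List Ty}
    (h : HasTypeArgs Γ ts τs) (n : ℕ) :
    ∃ ss k, GenArgs Γ τs ts ss (List.range' n k) ∧ HasTypeArgs Γ ss τs :=
  match ts, τs, h with
  | _, _, .nil => ⟨[], 0, .nil, .nil⟩
  | _, _, .cons ht hts =>
    have ⟨s, k₁, hgen₁, hty₁⟩ := ht.exists_gen n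
    have ⟨ss, k₂, hgen₂, hty₂⟩ := hts.exists_genArgs (n + k₁)
    ⟨s :: ss, k₁ + k₂, List.range'_append_1 ▸ .cons hgen₁ hgen₂, .cons hty₁ hty₂⟩

end

mutual

theorem Gen.occurs {τ : Ty} {t s : Term} {L : List ℕ} {v : ℕ}
    (hg : Gen Γ τ t s L) (hv : s.Occurs v) : t.Occurs v ∨ v ∈ L :=
  match τ, t, s, L, hg with
  | _, _, _, _, .static _ => .inl hv
  | _, _, _, _, .dynamic _ _ => by
    cases hv
    exact .inr (List.mem_singleton_self v)
  | _, _, _, _, .nonvar _ _ _ _ => by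
    cases hv with
    | app _ _ u hu hvu =>
      obtain ⟨w, hw, rfl⟩ := List.mem_map.mp hu
      cases hvu
      exact .inr hw
  | _, _, _, _, .con _ _ f _ ts _ _ _ _ hargs => by
    cases hv with
    | app _ _ s hs hvs =>
      exact (hargs.occurs hs hvs).imp_left fun ⟨t, ht, hvt⟩ => .app f ts t ht hvt

theorem GenArgs.occurs {τs : List Ty} {ts ss : List Term} {L : List ℕ} {v : ℕ} {s : Term}
    (hg : GenArgs Γ τs ts ss L) (hs : s ∈ ss) (hv : s.Occurs v) :
    (∃ t ∈ ts, t.Occurs v) ∨ v ∈ L :=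
  match τs, ts, ss, L, hg with
  | _, _, _, _, .nil => nomatch hs
  | _, _, _, _, .cons hg₁ hgs => by
    rcases List.mem_cons.mp hs with rfl | hs
    · exact (hg₁.occurs hv).imp (⟨_, List.mem_cons_self, ·⟩) (List.mem_append_left _)
    · exact (hgs.occurs hs hv).imp (fun ⟨t, ht, hvt⟩ => ⟨t, List.mem_cons_of_mem _ ht, hvt⟩)
        (List.mem_append_right _)

end

mutual

theorem Gen.exists_subst_eq {τ : Ty} {t s : Term} {L : List ℕ}
    (hg : Gen Γ τ t s L) (hL : L.Nodup) (hfresh : ∀ v ∈ L, ¬ t.Occurs v) :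
    ∃ θ : ℕ → Term, s.subst θ = t ∧ ∀ v ∉ L, θ v = .var v :=
  match τ, t, s, L, hg with
  | _, t, _, _, .static _ => ⟨.var, t.subst_var_self, fun _ _ => rfl⟩
  | _, t, _, _, .dynamic _ w =>
    ⟨Function.update .var w t, by rw [Term.subst_var, Function.update_self],
      fun _ hv => Function.update_of_ne (List.ne_of_not_mem_cons hv) _ _⟩
  | _, _, _, _, .nonvar f ts vs hlen => by
    obtain ⟨θ, hθ, hid⟩ := hL.exists_map_eq hlen .var
    refine ⟨θ, ?_, hid⟩
    rw [Term.subst_app, List.map_map,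
      show Term.subst θ ∘ .var = θ from funext (Term.subst_var θ), hθ]
  | _, _, _, _, .con _ _ f _ ts _ _ _ _ hargs => by
    obtain ⟨θ, hθ, hid⟩ :=
      hargs.exists_map_subst_eq hL fun v hv t ht hvt => hfresh v hv (.app f ts t ht hvt)
    exact ⟨θ, by rw [Term.subst_app, hθ], hid⟩

theorem GenArgs.exists_map_subst_eq {τs : List Ty} {ts ss : List Term} {L : List ℕ}
    (hg : GenArgs Γ τs ts ss L) (hL : L.Nodup) (hfresh : ∀ v ∈ L, ∀ t ∈ ts, ¬ t.Occurs v) :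
    ∃ θ : ℕ → Term, ss.map (Term.subst θ) = ts ∧ ∀ v ∉ L, θ v = .var v :=
  match τs, ts, ss, L, hg with
  | _, _, _, _, .nil => ⟨.var, rfl, fun _ _ => rfl⟩
  | _, _, _, _, .cons (t := t) (ts := ts) (s := s) (ss := ss) (L := L₁) (Ls := L₂) hg₁ hgs => by
    obtain ⟨hL₁, hL₂, hdisj⟩ := List.nodup_append.mp hL
    obtain ⟨θ₁, hθ₁, hid₁⟩ := hg₁.exists_subst_eq hL₁ fun v hv =>
      hfresh v (List.mem_append_left _ hv) t List.mem_cons_self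
    obtain ⟨θ₂, hθ₂, hid₂⟩ := hgs.exists_map_subst_eq hL₂ fun v hv t' ht' =>
      hfresh v (List.mem_append_right _ hv) t' (List.mem_cons_of_mem _ ht')
    refine ⟨fun v => if v ∈ L₁ then θ₁ v else θ₂ v, ?_, fun v hv => ?_⟩
    · rw [List.map_cons, ← hθ₁, ← hθ₂]
      congr 1
      · refine Term.subst_congr fun v hv => ?_
        split_ifs with hvL₁
        · rfl
        have hvt := (hg₁.occurs hv).resolve_right hvL₁
        rw [hid₁ v hvL₁, hid₂ v fun hvL₂ =>
          hfresh v (List.mem_append_right _ hvL₂) t List.mem_cons_self hvt]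
      · refine List.map_congr_left fun s hs => Term.subst_congr fun v hv => if_neg fun hvL₁ => ?_
        rcases hgs.occurs hs hv with ⟨t', ht', hvt'⟩ | hvL₂
        · exact hfresh v (List.mem_append_left _ hvL₁) t' (List.mem_cons_of_mem _ ht') hvt'
        · exact hdisj v hvL₁ v hvL₂ rfl
    · rw [List.mem_append, not_or] at hv
      exact (if_neg hv.1).trans (hid₂ v hv.2)

end

end Gen

/-- **Totality and safety of `gen_Δ` on safe atoms.** For every division `Δ` and
every atom `A` safe wrt `Δ`: `gen_Δ(A)` is defined (with distinct fresh variables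
not occurring in `A`); moreover `gen_Δ(A)` is again safe wrt `Δ`, and `A` is an
instance of `gen_Δ(A)`. -/
theorem genAtom_total_safe (Γ : TypeSystem) (Δ : Set (ℕ × List Ty))
    (hΔ : IsDivision Δ) (A : Atom) (h : SafeAtom Γ Δ A) :
    ∃ (B : Atom) (L : List ℕ), GenAtom Γ Δ A B L ∧ L.Nodup ∧
      (∀ v ∈ L, ∀ t ∈ A.args, ¬ Term.Occurs v t) ∧
      SafeAtom Γ Δ B ∧ A.IsInstanceOf B := by
  obtain ⟨τs, hmem, hargs⟩ := h
  obtain ⟨n, hn⟩ := Term.exists_occurs_lt A.args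
  obtain ⟨ss, k, hgen, hty⟩ := hargs.exists_genArgs n
  have hfresh : ∀ v ∈ List.range' n k, ∀ t ∈ A.args, ¬ t.Occurs v :=
    fun v hv t ht hvt => (hn t ht v hvt).not_ge (List.mem_range'_1.mp hv).1
  obtain ⟨θ, hθ, -⟩ := hgen.exists_map_subst_eq List.nodup_range' hfresh
  exact ⟨⟨A.pred, ss⟩, _, ⟨rfl, τs, hmem, hargs, hgen⟩, List.nodup_range', hfresh,
    ⟨τs, hmem, hty⟩, θ, congrArg (Atom.mk A.pred) hθ⟩
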